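/- For fixed total n and number of clusters C, among all cluster size vectors (n_1,...,n_C) with n_c ≥ 1 and ∑ n_c = n, the Chinese restaurant process partition probability b^C ∏_c (n_c-1)! / ∏_{i=1}^n (b+i-1) is maximized by the most unequal allocation (one cluster of size n-C+1 and C-1 singletons) and minimized at the most equal allocation when C divides n. -/
import Mathlib


open Finset

/-- Key pointwise lemma: `(m-1)! * m^k ≤ (k-1)! * m^m` for `m, k ≥ 1`. -/
lemma crp_key (m k : ℕ) (hm : 1 ≤ m) (hk : 1 ≤ k) :
    Nat.factorial (m - 1) * m ^ k ≤ Nat.factorial (k - 1) * m ^ m := by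
  have hfact : ∀ t : ℕ, 1 ≤ t → (∏ j ∈ Ico 1 t, j) = Nat.factorial (t - 1) := by
    intro t ht
    have h1 : t - 1 + 1 = t := Nat.succ_pred_eq_of_pos ht
    rw [← h1]
    exact Finset.prod_Ico_id_eq_factorial (t - 1)
  rcases le_total k m with h | h
  · -- (m-1)! = (k-1)! * ∏_{Ico k m} j ≤ (k-1)! * m^(m-k)
    have hsplit : (∏ j ∈ Ico 1 k, j) * (∏ j ∈ Ico k m, j) = ∏ j ∈ Ico 1 m, j :=
      Finset.prod_Ico_consecutive _ hk h
    have hP : (∏ j ∈ Ico k m, j) ≤ m ^ (m - k) := by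
      calc (∏ j ∈ Ico k m, j) ≤ ∏ _j ∈ Ico k m, m :=
            Finset.prod_le_prod' fun j hj => le_of_lt (Finset.mem_Ico.mp hj).2
        _ = m ^ (m - k) := by rw [Finset.prod_const, Nat.card_Ico]
    have hmfact : Nat.factorial (m - 1) ≤ Nat.factorial (k - 1) * m ^ (m - k) := by
      rw [← hfact m hm, ← hsplit, hfact k hk]
      exact Nat.mul_le_mul_left _ hP
    calc Nat.factorial (m - 1) * m ^ k
        ≤ (Nat.factorial (k - 1) * m ^ (m - k)) * m ^ k :=
          Nat.mul_le_mul_right _ hmfact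
      _ = Nat.factorial (k - 1) * m ^ m := by
          rw [mul_assoc, ← pow_add, Nat.sub_add_cancel h]
  · -- (k-1)! = (m-1)! * ∏_{Ico m k} j ≥ (m-1)! * m^(k-m)
    have hsplit : (∏ j ∈ Ico 1 m, j) * (∏ j ∈ Ico m k, j) = ∏ j ∈ Ico 1 k, j :=
      Finset.prod_Ico_consecutive _ hm h
    have hP : m ^ (k - m) ≤ (∏ j ∈ Ico m k, j) := by
      calc m ^ (k - m) = ∏ _j ∈ Ico m k, m := by rw [Finset.prod_const, Nat.card_Ico]
        _ ≤ ∏ j ∈ Ico m k, j :=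
            Finset.prod_le_prod' fun j hj => (Finset.mem_Ico.mp hj).1
    have hkfact : Nat.factorial (m - 1) * m ^ (k - m) ≤ Nat.factorial (k - 1) := by
      rw [← hfact k hk, ← hsplit, hfact m hm]
      exact Nat.mul_le_mul_left _ hP
    calc Nat.factorial (m - 1) * m ^ k
        = (Nat.factorial (m - 1) * m ^ (k - m)) * m ^ m := by
          rw [mul_assoc, ← pow_add, Nat.sub_add_cancel h]
      _ ≤ Nat.factorial (k - 1) * m ^ m := Nat.mul_le_mul_right _ hkfact

/-- Extremality of the CRP partition probability over cluster size vectors: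
for fixed `n`, number of clusters `C`, and `b > 0`, among all size vectors
`(n_1,...,n_C)` with `n_c ≥ 1` and `∑ n_c = n`, the CRP probability
`b^C ∏_c (n_c-1)! / ∏_{i=1}^n (b+i-1)` is maximized by the most unequal
allocation (one cluster of size `n-C+1` and `C-1` singletons, with factorial
product `(n-C)!`) and, when `C ∣ n`, minimized by the equal allocation
(all clusters of size `n/C`). -/
theorem crp_probability_extremal_allocations (n C : ℕ) (hC : 0 < C) (hCn : C ≤ n)
    (b : ℝ) (hb : 0 < b) (s : Fin C → ℕ) (hs : ∀ c, 1 ≤ s c) (hsum : ∑ c, s c = n) :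
    (b ^ C * ∏ c : Fin C, (Nat.factorial (s c - 1) : ℝ)) /
        (∏ i ∈ Finset.range n, (b + (i : ℕ)))
      ≤ (b ^ C * (Nat.factorial (n - C) : ℝ)) /
        (∏ i ∈ Finset.range n, (b + (i : ℕ))) ∧
    (C ∣ n →
      (b ^ C * ((Nat.factorial (n / C - 1) : ℝ)) ^ C) /
          (∏ i ∈ Finset.range n, (b + (i : ℕ)))
        ≤ (b ^ C * ∏ c : Fin C, (Nat.factorial (s c - 1) : ℝ)) /
          (∏ i ∈ Finset.range n, (b + (i : ℕ)))) := by
  have hden : 0 < ∏ i ∈ Finset.range n, (b + (i : ℕ)) :=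
    Finset.prod_pos fun i _ => by positivity
  have hbC : (0:ℝ) ≤ b ^ C := le_of_lt (pow_pos hb C)
  -- upper bound in ℕ
  have hupper : (∏ c : Fin C, Nat.factorial (s c - 1)) ≤ Nat.factorial (n - C) := by
    have hdvd := Nat.prod_factorial_dvd_factorial_sum Finset.univ (fun c => s c - 1)
    have hsum' : (∑ c : Fin C, (s c - 1)) = n - C := by
      rw [Finset.sum_tsub_distrib Finset.univ (fun c _ => hs c), hsum]
      simp
    rw [hsum'] at hdvd
    exact Nat.le_of_dvd (Nat.factorial_pos _) hdvd
  -- lower bound in ℕ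
  have hlower : ∀ _ : C ∣ n,
      (Nat.factorial (n / C - 1)) ^ C ≤ ∏ c : Fin C, Nat.factorial (s c - 1) := by
    intro hdvd
    set m := n / C with hm
    have hmC : m * C = n := by rw [hm, Nat.div_mul_cancel hdvd]
    have hm1 : 1 ≤ m := by
      by_contra h
      push_neg at h
      interval_cases m
      simp at hmC
      omega
    have key : (Nat.factorial (m - 1)) ^ C * m ^ n ≤
        (∏ c : Fin C, Nat.factorial (s c - 1)) * m ^ n := by
      calc (Nat.factorial (m - 1)) ^ C * m ^ n
          = ∏ c : Fin C, (Nat.factorial (m - 1) * m ^ (s c)) := by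
            rw [Finset.prod_mul_distrib, Finset.prod_const, Finset.prod_pow_eq_pow_sum,
              hsum, Finset.card_univ, Fintype.card_fin]
        _ ≤ ∏ c : Fin C, (Nat.factorial (s c - 1) * m ^ m) :=
            Finset.prod_le_prod' fun c _ => crp_key m (s c) hm1 (hs c)
        _ = (∏ c : Fin C, Nat.factorial (s c - 1)) * m ^ n := by
            rw [Finset.prod_mul_distrib, Finset.prod_const, ← pow_mul,
              Finset.card_univ, Fintype.card_fin, mul_comm m C, mul_comm C m, hmC]
    exact Nat.le_of_mul_le_mul_right key (pow_pos hm1 n)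
  have hupperR : (∏ c : Fin C, (Nat.factorial (s c - 1) : ℝ)) ≤ (Nat.factorial (n - C) : ℝ) := by
    exact_mod_cast hupper
  constructor
  · gcongr
  · intro hd
    have hlowerR : ((Nat.factorial (n / C - 1) : ℝ)) ^ C ≤
        ∏ c : Fin C, (Nat.factorial (s c - 1) : ℝ) := by exact_mod_cast hlower hd
    gcongr
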